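/- arXiv:1205.1368 — 3 statements merged into one kernel-verified Lean document; each statement's English description precedes it below -/
import Mathlib

section
/- If r(s) = s/√(tan²θ - s²) on an interval where |s| < tan θ, then the vector field d(s) = cos θ · (s·t(s) + n₁(s) + √(tan²θ - s²) · n₂(s)) along a unit-speed Frenet curve with curvature k ≡ 1 and torsion r is constant (d'(s) = 0), and ⟨d(s), n₁(s)⟩ = cos θ for all s. -/
/-!
Writing `d = cos θ • D` with `D = s • t + n₁ + b • n₂` and `b = √(tan²θ - s²)`, the Frenet
equations give `D' = (s - b r) • n₁ + (r + b') • n₂`. The torsion is chosen exactly so that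
`b r = s` and `b' = -s / b = -r`, so both coefficients vanish. The value of `⟪d, n₁⟫` is read off
from the orthonormality of the frame.
-/

theorem hasDerivAt_frenet_combination_zero {E : Type*} [NormedAddCommGroup E]
    [NormedSpace ℝ E] {t n₁ n₂ : ℝ → E} {a b r : ℝ → ℝ} {s : ℝ}
    (ht : HasDerivAt t (n₁ s) s) (hn₁ : HasDerivAt n₁ (-t s + r s • n₂ s) s)
    (hn₂ : HasDerivAt n₂ (-(r s) • n₁ s) s) (ha : HasDerivAt a 1 s)
    (hb : HasDerivAt b (-(r s)) s) (hab : a s = b s * r s) :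
    HasDerivAt (fun x => a x • t x + n₁ x + b x • n₂ x) 0 s := by
  convert ((ha.smul ht).add hn₁).add (hb.smul hn₂) using 1
  · rfl
  · have key : a s • n₁ s + (1 : ℝ) • t s + (-t s + r s • n₂ s)
        + (b s • (-(r s) • n₁ s) + (-(r s)) • n₂ s) = (a s - b s * r s) • n₁ s := by
      simp only [smul_smul]
      module
    rw [key, hab, sub_self, zero_smul]

theorem hasDerivAt_sqrt_sub_sq {c s : ℝ} (hs : s ^ 2 < c) :
    HasDerivAt (fun x => √(c - x ^ 2)) (-(s / √(c - s ^ 2))) s := by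
  have hpoly : HasDerivAt (fun x : ℝ => c - x ^ 2) (-(2 * s)) s := by
    simpa using (hasDerivAt_pow 2 s).const_sub c
  convert hpoly.sqrt (sub_pos.mpr hs).ne' using 1
  field_simp

theorem inner_frenet_combination_right_eq_one {F : Type*} [NormedAddCommGroup F]
    [InnerProductSpace ℝ F] {t n₁ n₂ : F} (a b : ℝ) (hn₁ : ‖n₁‖ = 1)
    (htn₁ : inner ℝ t n₁ = (0 : ℝ)) (hn₁n₂ : inner ℝ n₁ n₂ = (0 : ℝ)) :
    inner ℝ (a • t + n₁ + b • n₂) n₁ = (1 : ℝ) := by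
  rw [inner_add_left, inner_add_left, real_inner_smul_left, real_inner_smul_left, htn₁,
    real_inner_comm n₁ n₂, hn₁n₂, real_inner_self_eq_norm_sq, hn₁]
  ring

theorem stmt_2_general (θ : ℝ)
    (t n₁ n₂ : ℝ → EuclideanSpace ℝ (Fin 3)) (r : ℝ → ℝ)
    (hr : ∀ s, |s| < Real.tan θ → r s = s / Real.sqrt (Real.tan θ ^ 2 - s ^ 2))
    (hn₁ : ∀ s, ‖n₁ s‖ = 1)
    (htn₁ : ∀ s, inner ℝ (t s) (n₁ s) = (0 : ℝ))
    (hn₁n₂ : ∀ s, inner ℝ (n₁ s) (n₂ s) = (0 : ℝ))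
    (hFt : ∀ s, |s| < Real.tan θ → HasDerivAt t (n₁ s) s)
    (hFn₁ : ∀ s, |s| < Real.tan θ → HasDerivAt n₁ (-t s + r s • n₂ s) s)
    (hFn₂ : ∀ s, |s| < Real.tan θ → HasDerivAt n₂ (-(r s) • n₁ s) s)
    (d : ℝ → EuclideanSpace ℝ (Fin 3))
    (hd : ∀ s, d s = Real.cos θ •
      (s • t s + n₁ s + Real.sqrt (Real.tan θ ^ 2 - s ^ 2) • n₂ s)) :
    ∀ s, |s| < Real.tan θ →
      HasDerivAt d 0 s ∧ inner ℝ (d s) (n₁ s) = Real.cos θ := by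
  intro s hs
  have hs_sq : s ^ 2 < Real.tan θ ^ 2 := sq_lt_sq' (abs_lt.mp hs).1 (abs_lt.mp hs).2
  have hb_pos : 0 < √(Real.tan θ ^ 2 - s ^ 2) := Real.sqrt_pos.mpr (sub_pos.mpr hs_sq)
  have hb : HasDerivAt (fun x => √(Real.tan θ ^ 2 - x ^ 2)) (-(r s)) s := by
    rw [hr s hs]
    exact hasDerivAt_sqrt_sub_sq hs_sq
  have hab : s = √(Real.tan θ ^ 2 - s ^ 2) * r s := by
    rw [hr s hs]
    field_simp
  constructor
  · rw [funext hd, ← smul_zero (Real.cos θ)]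
    exact (hasDerivAt_frenet_combination_zero (hFt s hs) (hFn₁ s hs) (hFn₂ s hs)
      (hasDerivAt_id s) hb hab).const_smul (Real.cos θ)
  · rw [hd s, real_inner_smul_left,
      inner_frenet_combination_right_eq_one _ _ (hn₁ s) (htn₁ s) (hn₁n₂ s), mul_one]

/-- If r(s) = s/√(tan²θ - s²) for |s| < tan θ, then along a unit-speed
Frenet curve with k ≡ 1 and torsion r the vector field
d(s) = cos θ · (s·t(s) + n₁(s) + √(tan²θ - s²)·n₂(s)) is constant (d' = 0) and
⟨d(s), n₁(s)⟩ = cos θ for all s. -/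
theorem stmt_2 (θ : ℝ) (hθ : θ ∈ Set.Ioo 0 (Real.pi / 2))
    (t n₁ n₂ : ℝ → EuclideanSpace ℝ (Fin 3)) (r : ℝ → ℝ)
    (hr : ∀ s, |s| < Real.tan θ → r s = s / Real.sqrt (Real.tan θ ^ 2 - s ^ 2))
    (ht : ∀ s, ‖t s‖ = 1) (hn₁ : ∀ s, ‖n₁ s‖ = 1) (hn₂ : ∀ s, ‖n₂ s‖ = 1)
    (htn₁ : ∀ s, inner ℝ (t s) (n₁ s) = (0 : ℝ))
    (htn₂ : ∀ s, inner ℝ (t s) (n₂ s) = (0 : ℝ))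
    (hn₁n₂ : ∀ s, inner ℝ (n₁ s) (n₂ s) = (0 : ℝ))
    (hFt : ∀ s, |s| < Real.tan θ → HasDerivAt t (n₁ s) s)
    (hFn₁ : ∀ s, |s| < Real.tan θ → HasDerivAt n₁ (-t s + r s • n₂ s) s)
    (hFn₂ : ∀ s, |s| < Real.tan θ → HasDerivAt n₂ (-(r s) • n₁ s) s)
    (d : ℝ → EuclideanSpace ℝ (Fin 3))
    (hd : ∀ s, d s = Real.cos θ •
      (s • t s + n₁ s + Real.sqrt (Real.tan θ ^ 2 - s ^ 2) • n₂ s)) :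
    ∀ s, |s| < Real.tan θ →
      HasDerivAt d 0 s ∧ inner ℝ (d s) (n₁ s) = Real.cos θ :=
  stmt_2_general θ t n₁ n₂ r hr hn₁ htn₁ hn₁n₂ hFt hFn₁ hFn₂ d hd
end

section
/- If α is a unit-speed curve in ℝ³ with Frenet apparatus (t^α, n₁^α, n₂^α, k^α, r^α) and r^α nowhere zero, then the curve β(s) = ∫_{s₀}^s n₂^α(u) du is unit-speed with Frenet apparatus satisfying t^β = n₂^α, k^β = |r^α|, n₁^β = ±n₁^α, n₂^β = ∓t^α, and torsion r^β = k^α (with sign conventions: if r^α > 0 then n₁^β = -n₁^α). -/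
/-!
Since `β' = n₂`, the curve `β` is unit speed with tangent `n₂`, and the Frenet equations of `α`,
read backwards, are those of `β`: `n₂' = -r n₁ = |r| (ε n₁)` with `ε = -sign r`, and then
`(ε n₁)' = -|r| n₂ + k (-ε t)`, `(-ε t)' = -k (ε n₁)`. Because `r` is continuous and never zero,
`ε` is locally constant, so it passes through the derivatives.
-/

open Filter Topology

lemma eventually_ite_pos_eq {α : Type*} {r : ℝ → ℝ} {s : ℝ} (hrc : ContinuousAt r s)
    (hr : r s ≠ 0) (a b : α) :
    ∀ᶠ u in 𝓝 s, (if 0 < r u then a else b) = if 0 < r s then a else b := by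
  rcases hr.lt_or_gt with hneg | hpos
  · filter_upwards [hrc.eventually_lt continuousAt_const hneg] with u hu
    rw [if_neg hu.not_gt, if_neg hneg.not_gt]
  · filter_upwards [continuousAt_const.eventually_lt hrc hpos] with u hu
    rw [if_pos hu, if_pos hpos]

lemma abs_mul_ite_pos_neg_one_one (x : ℝ) : |x| * (if 0 < x then (-1 : ℝ) else 1) = -x := by
  split_ifs with hx
  · rw [abs_of_pos hx, mul_neg_one]
  · rw [abs_of_nonpos (not_lt.mp hx), mul_one]

lemma ite_pos_neg_one_one_mul (x : ℝ) : (if 0 < x then (-1 : ℝ) else 1) * x = -|x| := by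
  split_ifs with hx
  · rw [abs_of_pos hx, neg_one_mul]
  · rw [abs_of_nonpos (not_lt.mp hx), one_mul, neg_neg]

lemma HasDerivAt.smul_of_eventuallyEq_const {E : Type*} [NormedAddCommGroup E]
    [NormedSpace ℝ E] {c : ℝ → ℝ} {f : ℝ → E} {f' : E} {s : ℝ} (hf : HasDerivAt f f' s)
    (hc : ∀ᶠ u in 𝓝 s, c u = c s) : HasDerivAt (fun u => c u • f u) (c s • f') s :=
  (hf.const_smul (c s)).congr_of_eventuallyEq (hc.mono fun u hu => congrArg (· • f u) hu)

theorem stmt_9_general (t n₁ n₂ : ℝ → EuclideanSpace ℝ (Fin 3)) (k r : ℝ → ℝ)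
    (hn₂ : ∀ s, ‖n₂ s‖ = 1)
    (hr : ∀ s, r s ≠ 0)
    (hrc : Continuous r)
    (hFt : ∀ s, HasDerivAt t (k s • n₁ s) s)
    (hFn₁ : ∀ s, HasDerivAt n₁ (-(k s) • t s + r s • n₂ s) s)
    (hFn₂ : ∀ s, HasDerivAt n₂ (-(r s) • n₁ s) s)
    (s₀ : ℝ) (β : ℝ → EuclideanSpace ℝ (Fin 3))
    (hβ : ∀ s, β s = ∫ u in s₀..s, n₂ u) :
    -- t^β = n₂^α and β is unit speed
    (∀ s, HasDerivAt β (n₂ s) s) ∧ (∀ s, ‖n₂ s‖ = 1) ∧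
    -- (t^β)' = k^β • n₁^β with k^β = |r| and n₁^β = ε • n₁
    (∀ s, HasDerivAt n₂ (|r s| • ((if 0 < r s then (-1 : ℝ) else 1) • n₁ s)) s) ∧
    -- (n₁^β)' = -k^β • t^β + r^β • n₂^β with r^β = k and n₂^β = -ε • t
    (∀ s, HasDerivAt (fun u => (if 0 < r u then (-1 : ℝ) else 1) • n₁ u)
      (-(|r s|) • n₂ s + k s • (-(if 0 < r s then (-1 : ℝ) else 1) • t s)) s) ∧
    -- (n₂^β)' = -r^β • n₁^β
    (∀ s, HasDerivAt (fun u => -(if 0 < r u then (-1 : ℝ) else 1) • t u)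
      (-(k s) • ((if 0 < r s then (-1 : ℝ) else 1) • n₁ s)) s) := by
  set ε : ℝ → ℝ := fun u => if 0 < r u then (-1 : ℝ) else 1
  have hε : ∀ s, |r s| * ε s = -r s := fun s => abs_mul_ite_pos_neg_one_one (r s)
  have hε' : ∀ s, ε s * r s = -|r s| := fun s => ite_pos_neg_one_one_mul (r s)
  have hloc : ∀ s, ∀ᶠ u in 𝓝 s, ε u = ε s :=
    fun s => eventually_ite_pos_eq hrc.continuousAt (hr s) _ _
  have hn₂c : Continuous n₂ := continuous_iff_continuousAt.2 fun s => (hFn₂ s).continuousAt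
  refine ⟨fun s => ?_, hn₂, fun s => ?_, fun s => ?_, fun s => ?_⟩
  · rw [funext hβ]
    exact (hn₂c.integral_hasStrictDerivAt s₀ s).hasDerivAt
  · rw [smul_smul, hε]
    exact hFn₂ s
  · refine ((hFn₁ s).smul_of_eventuallyEq_const (hloc s)).congr_deriv ?_
    rw [smul_add, smul_smul, smul_smul, hε']
    module
  · refine ((hFt s).smul_of_eventuallyEq_const (c := fun u => -ε u)
      ((hloc s).mono fun u hu => by rw [hu])).congr_deriv ?_
    rw [smul_smul, smul_smul, neg_mul, neg_mul, mul_comm]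

/-- For a unit-speed curve α with Frenet apparatus
(t, n₁, n₂, k, r), r nowhere zero, the curve β(s) = ∫_{s₀}^s n₂(u) du is unit-speed
with Frenet apparatus t^β = n₂, k^β = |r|, n₁^β = ε n₁, n₂^β = -ε t and torsion
r^β = k, where ε = -1 if r > 0 and ε = 1 otherwise. -/
theorem stmt_9 (t n₁ n₂ : ℝ → EuclideanSpace ℝ (Fin 3)) (k r : ℝ → ℝ)
    (ht : ∀ s, ‖t s‖ = 1) (hn₁ : ∀ s, ‖n₁ s‖ = 1) (hn₂ : ∀ s, ‖n₂ s‖ = 1)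
    (hk : ∀ s, 0 < k s) (hr : ∀ s, r s ≠ 0)
    (hkc : Continuous k) (hrc : Continuous r)
    (hFt : ∀ s, HasDerivAt t (k s • n₁ s) s)
    (hFn₁ : ∀ s, HasDerivAt n₁ (-(k s) • t s + r s • n₂ s) s)
    (hFn₂ : ∀ s, HasDerivAt n₂ (-(r s) • n₁ s) s)
    (s₀ : ℝ) (β : ℝ → EuclideanSpace ℝ (Fin 3))
    (hβ : ∀ s, β s = ∫ u in s₀..s, n₂ u) :
    -- t^β = n₂^α and β is unit speed
    (∀ s, HasDerivAt β (n₂ s) s) ∧ (∀ s, ‖n₂ s‖ = 1) ∧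
    -- (t^β)' = k^β • n₁^β with k^β = |r| and n₁^β = ε • n₁
    (∀ s, HasDerivAt n₂ (|r s| • ((if 0 < r s then (-1 : ℝ) else 1) • n₁ s)) s) ∧
    -- (n₁^β)' = -k^β • t^β + r^β • n₂^β with r^β = k and n₂^β = -ε • t
    (∀ s, HasDerivAt (fun u => (if 0 < r u then (-1 : ℝ) else 1) • n₁ u)
      (-(|r s|) • n₂ s + k s • (-(if 0 < r s then (-1 : ℝ) else 1) • t s)) s) ∧
    -- (n₂^β)' = -r^β • n₁^β
    (∀ s, HasDerivAt (fun u => -(if 0 < r u then (-1 : ℝ) else 1) • t u)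
      (-(k s) • ((if 0 < r s then (-1 : ℝ) else 1) • n₁ s)) s) :=
  stmt_9_general t n₁ n₂ k r hn₂ hr hrc hFt hFn₁ hFn₂ s₀ β hβ
end

section
/- If two unit-speed Frenet curves α, β with nonvanishing torsions satisfy n₂^α(s_α(s_β)) = n₂^β(s_β) for all s_β under a reparametrization s_α(s_β) with ds_α/ds_β = r_β/r_α > 0, then also n₁^α(s_α(s_β)) = n₁^β(s_β) and t^α(s_α(s_β)) = t^β(s_β); i.e., equality of binormals under this transformation implies the curves are similar curves. -/
/-!
Differentiating `n₂^α ∘ s_α = n₂^β` with the chain rule gives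
`-(r_β / r_α) r_α n₁^α ∘ s_α = -r_β n₁^β`, and `r_β ≠ 0` cancels, so the principal normals agree.
The tangents then agree because `t = n₁ × n₂` for both frames.
-/

theorem normal_comp_eq_of_binormal_comp_eq {E : Type*} [NormedAddCommGroup E] [NormedSpace ℝ E]
    {n₁α n₂α n₁β n₂β : ℝ → E} {rα rβ sα : ℝ → ℝ} {s : ℝ}
    (hrα : rα (sα s) ≠ 0) (hrβ : rβ s ≠ 0)
    (hn₂α : HasDerivAt n₂α (-(rα (sα s)) • n₁α (sα s)) (sα s))
    (hn₂β : HasDerivAt n₂β (-(rβ s) • n₁β s) s)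
    (hsα : HasDerivAt sα (rβ s / rα (sα s)) s)
    (hbinormal : n₂α ∘ sα = n₂β) :
    n₁α (sα s) = n₁β s := by
  have hchain : HasDerivAt n₂β (-(rβ s) • n₁α (sα s)) s := by
    have h := hn₂α.scomp s hsα
    rwa [hbinormal, smul_smul, div_mul_eq_mul_div, mul_neg, neg_div,
      mul_div_cancel_right₀ _ hrα] at h
  exact smul_right_injective E (neg_ne_zero.mpr hrβ) (hn₂β.unique hchain).symm

theorem stmt_13_general (tα n₁α n₂α tβ n₁β n₂β : ℝ → (Fin 3 → ℝ))
    (rα rβ : ℝ → ℝ)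
    (hrα : ∀ s, rα s ≠ 0) (hrβ : ∀ s, rβ s ≠ 0)
    (hframeα : ∀ s, tα s = crossProduct (n₁α s) (n₂α s))
    (hframeβ : ∀ s, tβ s = crossProduct (n₁β s) (n₂β s))
    (hFn₂α : ∀ s, HasDerivAt n₂α (-(rα s) • n₁α s) s)
    (hFn₂β : ∀ s, HasDerivAt n₂β (-(rβ s) • n₁β s) s)
    (sα : ℝ → ℝ) (hsα : ∀ s, HasDerivAt sα (rβ s / rα (sα s)) s)
    (hbinormal : ∀ s, n₂α (sα s) = n₂β s) :
    (∀ s, n₁α (sα s) = n₁β s) ∧ (∀ s, tα (sα s) = tβ s) := by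
  have hn₁ : ∀ s, n₁α (sα s) = n₁β s := fun s =>
    normal_comp_eq_of_binormal_comp_eq (hrα _) (hrβ s) (hFn₂α _) (hFn₂β s) (hsα s)
      (funext hbinormal)
  exact ⟨hn₁, fun s => by rw [hframeα, hframeβ, hn₁ s, hbinormal s]⟩

/-- If two unit-speed Frenet curves α, β with nonvanishing torsions
satisfy n₂^α∘s_α = n₂^β under a reparametrization with ds_α/ds_β = r_β/r_α > 0,
then also n₁^α∘s_α = n₁^β and t^α∘s_α = t^β. -/
theorem stmt_13 (tα n₁α n₂α tβ n₁β n₂β : ℝ → (Fin 3 → ℝ))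
    (kα rα kβ rβ : ℝ → ℝ)
    (hkα : ∀ s, 0 < kα s) (hkβ : ∀ s, 0 < kβ s)
    (hrα : ∀ s, rα s ≠ 0) (hrβ : ∀ s, rβ s ≠ 0)
    (hframeα : ∀ s, tα s = crossProduct (n₁α s) (n₂α s))
    (hframeβ : ∀ s, tβ s = crossProduct (n₁β s) (n₂β s))
    (hFtα : ∀ s, HasDerivAt tα (kα s • n₁α s) s)
    (hFn₁α : ∀ s, HasDerivAt n₁α (-(kα s) • tα s + rα s • n₂α s) s)
    (hFn₂α : ∀ s, HasDerivAt n₂α (-(rα s) • n₁α s) s)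
    (hFtβ : ∀ s, HasDerivAt tβ (kβ s • n₁β s) s)
    (hFn₁β : ∀ s, HasDerivAt n₁β (-(kβ s) • tβ s + rβ s • n₂β s) s)
    (hFn₂β : ∀ s, HasDerivAt n₂β (-(rβ s) • n₁β s) s)
    (sα : ℝ → ℝ) (hsα : ∀ s, HasDerivAt sα (rβ s / rα (sα s)) s)
    (hpos : ∀ s, 0 < rβ s / rα (sα s))
    (hbinormal : ∀ s, n₂α (sα s) = n₂β s) :
    (∀ s, n₁α (sα s) = n₁β s) ∧ (∀ s, tα (sα s) = tβ s) :=
  stmt_13_general tα n₁α n₂α tβ n₁β n₂β rα rβ hrα hrβ hframeα hframeβ hFn₂α hFn₂β sα hsα hbinormal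
end
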